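/- Suppose the step size is constant, t_k = t > 0 for all k, and suppose inf_{x ∈ X} Σ_{i=1}^m f_i(x) = −∞. Then liminf_{k→∞} f(x_k) = −∞, where f = Σ_{i=1}^m f_i; that is, the sequence {f(x_k)} has subsequences diverging to −∞. -/

import Mathlib

/-!
With the constant step `t`, every update has norm at most `t m C`, so the delayed subgradients
used at iteration `k` are taken at points within `(W - 1) t m C` of `x k`. Since subgradients
are bounded by `C`, such a delayed subgradient `g` of `f i` still satisfies
`⟪g, x k - z⟫ ≥ f i (x k) - f i z - 2 C (W - 1) t m C`. With the nonexpansiveness of the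
projection this gives, for every `z ∈ X` and all `k ≥ W - 1`,
`‖x (k+1) - z‖² ≤ ‖x k - z‖² - 2t (f (x k) - f z) + e` with `e` independent of `k` and `z`.
If `f (x k) ≥ M` for all large `k`, then for `z ∈ X` with `f z < M - e / (2t)` the distances
`‖x k - z‖²` would decrease by a fixed positive amount at every step, which is impossible.
-/

open RealInnerProductSpace Filter Finset

theorem norm_sub_sub_le_mul {F : Type*} [SeminormedAddCommGroup F] {x : ℕ → F} {D : ℝ}
    (hx : ∀ k, ‖x (k + 1) - x k‖ ≤ D) {k l : ℕ} (hlk : l ≤ k) : ‖x k - x (k - l)‖ ≤ l * D := by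
  have := dist_le_Ico_sum_of_dist_le (f := x) (d := fun _ => D) (Nat.sub_le k l)
    fun _ _ => by rw [dist_comm, dist_eq_norm]; exact hx _
  rw [sum_const, Nat.card_Ico, Nat.sub_sub_self hlk, nsmul_eq_mul] at this
  rwa [← dist_eq_norm, dist_comm]

theorem not_eventually_succ_le_sub {a : ℕ → ℝ} (ha : ∀ k, 0 ≤ a k) {δ : ℝ} (hδ : 0 < δ) :
    ¬ ∀ᶠ k in atTop, a (k + 1) ≤ a k - δ := by
  intro h
  obtain ⟨N, hN⟩ := eventually_atTop.1 h
  have hlin (j : ℕ) : a (N + j) ≤ a N - j * δ := by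
    induction j with
    | zero => simp
    | succ j ih =>
      rw [← add_assoc]
      push_cast
      linarith [hN (N + j) (Nat.le_add_right N j)]
  obtain ⟨j, hj⟩ := exists_nat_gt (a N / δ)
  rw [div_lt_iff₀ hδ] at hj
  linarith [hlin j, ha (N + j)]

theorem frequently_lt_of_eventually_le_sub_mul {a u : ℕ → ℝ} (ha : ∀ k, 0 ≤ a k) {b c e M : ℝ}
    (hc : 0 < c) (h : ∀ᶠ k in atTop, a (k + 1) ≤ a k - c * (u k - b) + e)
    (hM : b + e / c < M) : ∃ᶠ k in atTop, u k < M := by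
  by_contra hlt
  rw [not_frequently] at hlt
  have hδ : 0 < c * (M - b) - e := by
    have : e / c < M - b := by linarith
    rw [div_lt_iff₀' hc] at this
    linarith
  refine not_eventually_succ_le_sub ha hδ ?_
  filter_upwards [h, hlt] with k hk hMk
  nlinarith [mul_le_mul_of_nonneg_left (not_lt.1 hMk) hc.le]

theorem EReal.liminf_coe_eq_bot {α : Type*} {l : Filter α} {u : α → ℝ}
    (h : ∀ M : ℝ, ∃ᶠ k in l, u k < M) : liminf (fun k => (u k : EReal)) l = ⊥ := by
  rw [← le_bot_iff, liminf_le_iff]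
  intro y hy
  obtain ⟨M, -, hMy⟩ := EReal.exists_between_coe_real hy
  exact (h M).mono fun k hk => (EReal.coe_lt_coe_iff.2 hk).trans hMy

section InnerProductSpace

variable {E : Type*} [NormedAddCommGroup E] [InnerProductSpace ℝ E]

def IsSubgradient (f : E → ℝ) (a g : E) : Prop :=
  ∀ y, f a + ⟪g, y - a⟫ ≤ f y

theorem ConvexOn.exists_isSubgradient [FiniteDimensional ℝ E] {f : E → ℝ}
    (hf : ConvexOn ℝ Set.univ f) (a : E) : ∃ g, IsSubgradient f a g := by
  have hopen : IsOpen {p : E × ℝ | p.1 ∈ Set.univ ∧ f p.1 < p.2} := by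
    simpa using isOpen_lt ((hf.continuousOn isOpen_univ).comp_continuous continuous_fst
      fun _ => Set.mem_univ _) continuous_snd
  -- separate `(a, f a)` from the open strict epigraph by a linear functional `φ`
  obtain ⟨φ, hφ⟩ := geometric_hahn_banach_point_open hf.convex_strict_epigraph hopen
    (x := (a, f a)) (by simp)
  set c := φ (0, 1)
  set L : E →L[ℝ] ℝ := φ.comp (ContinuousLinearMap.inl ℝ E ℝ)
  have hφ_apply (y : E) (s : ℝ) : φ (y, s) = L y + s * c := by
    rw [show (y, s) = (y, (0 : ℝ)) + s • ((0 : E), (1 : ℝ)) by simp, map_add, map_smul]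
    rfl
  have hc : 0 < c := by
    have := hφ (a, f a + 1) (by simp)
    rw [hφ_apply, hφ_apply] at this
    linarith
  have hsupport (y : E) : L a + f a * c ≤ L y + f y * c := by
    refine le_of_forall_pos_lt_add fun ε hε => ?_
    have := hφ (y, f y + ε / c) (by simp [hε, hc])
    rw [hφ_apply, hφ_apply, add_mul, div_mul_cancel₀ _ hc.ne'] at this
    linarith
  refine ⟨-c⁻¹ • (InnerProductSpace.toDual ℝ E).symm L, fun y => ?_⟩
  rw [real_inner_smul_left, inner_sub_right, InnerProductSpace.toDual_symm_apply,
    InnerProductSpace.toDual_symm_apply]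
  have := hsupport y
  field_simp
  nlinarith

theorem ConvexOn.sub_le_mul_norm_sub [FiniteDimensional ℝ E] {f : E → ℝ}
    (hf : ConvexOn ℝ Set.univ f) {a : E} {C : ℝ}
    (hC : ∀ g, IsSubgradient f a g → ‖g‖ ≤ C) (b : E) : f a - f b ≤ C * ‖a - b‖ := by
  obtain ⟨g, hg⟩ := hf.exists_isSubgradient a
  have hgb := hg b
  have hinner : -⟪g, b - a⟫ ≤ ‖g‖ * ‖a - b‖ := by
    rw [← inner_neg_right, neg_sub]
    exact real_inner_le_norm g (a - b)
  linarith [mul_le_mul_of_nonneg_right (hC g hg) (norm_nonneg (a - b))]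

theorem IsSubgradient.sub_sub_le_inner {f : E → ℝ} {x y z g : E} {C r : ℝ}
    (hg : IsSubgradient f y g) (hgC : ‖g‖ ≤ C) (hf : f x - f y ≤ C * ‖x - y‖)
    (hxy : ‖x - y‖ ≤ r) (hC : 0 ≤ C) : f x - f z - 2 * C * r ≤ ⟪g, x - z⟫ := by
  have hsplit : ⟪g, x - z⟫ = ⟪g, x - y⟫ - ⟪g, z - y⟫ := by
    rw [← inner_sub_right, sub_sub_sub_cancel_right]
  have := hg z
  have := neg_le_of_abs_le ((abs_real_inner_le_norm g (x - y)).trans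
    (mul_le_mul hgC hxy (norm_nonneg _) hC))
  nlinarith

theorem norm_proj_sub_le {K : Set E} (hK : Convex ℝ K) {P : E → E}
    (hP : ∀ u, P u ∈ K ∧ ∀ y ∈ K, ‖u - P u‖ ≤ ‖u - y‖) (u : E) {z : E} (hz : z ∈ K) :
    ‖P u - z‖ ≤ ‖u - z‖ := by
  obtain ⟨hPu, hmin⟩ := hP u
  have : Nonempty K := ⟨⟨z, hz⟩⟩
  have hinf : ‖u - P u‖ = ⨅ w : K, ‖u - w‖ :=
    le_antisymm (le_ciInf fun w => hmin w w.2)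
      (ciInf_le ⟨0, Set.forall_mem_range.2 fun _ => norm_nonneg _⟩ (⟨P u, hPu⟩ : K))
  have hvar := (norm_eq_iInf_iff_real_inner_le_zero hK hPu).1 hinf z hz
  have hexpand : ‖u - z‖ ^ 2 = ‖u - P u‖ ^ 2 - 2 * ⟪u - P u, z - P u⟫ + ‖P u - z‖ ^ 2 := by
    rw [← sub_sub_sub_cancel_right u z (P u), norm_sub_sq_real, norm_sub_rev z]
  refine le_of_sq_le_sq ?_ (norm_nonneg _)
  nlinarith [sq_nonneg ‖u - P u‖]

theorem sq_norm_proj_sub_smul_sub_le {K : Set E} (hK : Convex ℝ K) {P : E → E}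
    (hP : ∀ u, P u ∈ K ∧ ∀ y ∈ K, ‖u - P u‖ ≤ ‖u - y‖) (x d : E) (t : ℝ) {z : E}
    (hz : z ∈ K) :
    ‖P (x - t • d) - z‖ ^ 2 ≤ ‖x - z‖ ^ 2 - 2 * t * ⟪d, x - z⟫ + t ^ 2 * ‖d‖ ^ 2 := by
  calc ‖P (x - t • d) - z‖ ^ 2 ≤ ‖(x - z) - t • d‖ ^ 2 := by
        rw [sub_right_comm]
        exact pow_le_pow_left₀ (norm_nonneg _) (norm_proj_sub_le hK hP _ hz) 2
    _ = ‖x - z‖ ^ 2 - 2 * t * ⟪d, x - z⟫ + t ^ 2 * ‖d‖ ^ 2 := by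
        rw [norm_sub_sq_real, real_inner_smul_right, norm_smul, Real.norm_eq_abs, mul_pow,
          sq_abs, real_inner_comm]
        ring

variable {ι κ : Type*} [Fintype ι] {s : ι → Finset κ} {w : ι → κ → ℝ} {v : ι → κ → E}

theorem norm_sum_sum_smul_le {C : ℝ} (hw0 : ∀ i, ∀ l ∈ s i, 0 ≤ w i l)
    (hw1 : ∀ i, ∑ l ∈ s i, w i l ≤ 1) (hC : 0 ≤ C) (hv : ∀ i, ∀ l ∈ s i, ‖v i l‖ ≤ C) :
    ‖∑ i, ∑ l ∈ s i, w i l • v i l‖ ≤ Fintype.card ι * C := by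
  have hinner (i : ι) : ‖∑ l ∈ s i, w i l • v i l‖ ≤ C :=
    calc ‖∑ l ∈ s i, w i l • v i l‖ ≤ ∑ l ∈ s i, w i l * C := by
          refine (norm_sum_le _ _).trans (sum_le_sum fun l hl => ?_)
          rw [norm_smul, Real.norm_of_nonneg (hw0 i l hl)]
          exact mul_le_mul_of_nonneg_left (hv i l hl) (hw0 i l hl)
      _ ≤ C := by rw [← sum_mul]; exact mul_le_of_le_one_left hC (hw1 i)
  calc ‖∑ i, ∑ l ∈ s i, w i l • v i l‖ ≤ ∑ _i : ι, C :=
        (norm_sum_le _ _).trans (sum_le_sum fun i _ => hinner i)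
    _ = Fintype.card ι * C := by simp

theorem sum_le_inner_sum_sum_smul {a : ι → ℝ} {y : E} (hw0 : ∀ i, ∀ l ∈ s i, 0 ≤ w i l)
    (hw1 : ∀ i, ∑ l ∈ s i, w i l = 1) (hv : ∀ i, ∀ l ∈ s i, a i ≤ ⟪v i l, y⟫) :
    ∑ i, a i ≤ ⟪∑ i, ∑ l ∈ s i, w i l • v i l, y⟫ := by
  simp only [sum_inner, real_inner_smul_left]
  refine sum_le_sum fun i _ => ?_
  calc a i = ∑ l ∈ s i, w i l * a i := by rw [← sum_mul, hw1, one_mul]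
    _ ≤ ∑ l ∈ s i, w i l * ⟪v i l, y⟫ :=
        sum_le_sum fun l hl => mul_le_mul_of_nonneg_left (hv i l hl) (hw0 i l hl)

theorem sq_norm_proj_sub_sum_sum_smul_sub_le {K : Set E} (hK : Convex ℝ K) {P : E → E}
    (hP : ∀ u, P u ∈ K ∧ ∀ y ∈ K, ‖u - P u‖ ≤ ‖u - y‖) {f : ι → E → ℝ} {y : ι → κ → E}
    {x z : E} {t C R : ℝ} (hz : z ∈ K) (ht : 0 ≤ t) (hC : 0 ≤ C)
    (hw0 : ∀ i, ∀ l ∈ s i, 0 ≤ w i l) (hw1 : ∀ i, ∑ l ∈ s i, w i l = 1)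
    (hv : ∀ i, ∀ l ∈ s i, IsSubgradient (f i) (y i l) (v i l))
    (hvC : ∀ i, ∀ l ∈ s i, ‖v i l‖ ≤ C)
    (hf : ∀ i, ∀ l ∈ s i, f i x - f i (y i l) ≤ C * ‖x - y i l‖)
    (hR : ∀ i, ∀ l ∈ s i, ‖x - y i l‖ ≤ R) :
    ‖P (x - t • ∑ i, ∑ l ∈ s i, w i l • v i l) - z‖ ^ 2 ≤
      ‖x - z‖ ^ 2 - 2 * t * (∑ i, f i x - ∑ i, f i z) +
        (2 * t * (Fintype.card ι * (2 * C * R)) + (t * (Fintype.card ι * C)) ^ 2) := by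
  have hcorr := sum_le_inner_sum_sum_smul (y := x - z) hw0 hw1 fun i l hl =>
    (hv i l hl).sub_sub_le_inner (z := z) (hvC i l hl) (hf i l hl) (hR i l hl) hC
  simp only [sum_sub_distrib, sum_const, card_univ, nsmul_eq_mul] at hcorr
  have hd := norm_sum_sum_smul_le hw0 (fun i => (hw1 i).le) hC hvC
  calc _ ≤ ‖x - z‖ ^ 2 - 2 * t * ⟪∑ i, ∑ l ∈ s i, w i l • v i l, x - z⟫ +
        t ^ 2 * ‖∑ i, ∑ l ∈ s i, w i l • v i l‖ ^ 2 :=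
        sq_norm_proj_sub_smul_sub_le hK hP _ _ _ hz
    _ ≤ _ := by
        nlinarith [mul_le_mul_of_nonneg_left hcorr ht,
          mul_le_mul_of_nonneg_left (pow_le_pow_left₀ (norm_nonneg _) hd 2) (sq_nonneg t)]

end InnerProductSpace

theorem incremental_cp_constant_step_unbounded_below_general
    (n m W : ℕ)
    (X : Set (EuclideanSpace ℝ (Fin n)))
    (hXconvex : Convex ℝ X)
    (f : Fin m → EuclideanSpace ℝ (Fin n) → ℝ)
    (hfconv : ∀ i, ConvexOn ℝ Set.univ (f i))
    (C : ℝ) (hC : 0 < C)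
    -- every subgradient of any `f i` at any point of `X` has norm at most `C`
    (hCbound : ∀ i, ∀ z ∈ X, ∀ g : EuclideanSpace ℝ (Fin n),
      (∀ y, f i z + ⟪g, y - z⟫ ≤ f i y) → ‖g‖ ≤ C)
    -- `P` is the Euclidean projection onto `X`
    (P : EuclideanSpace ℝ (Fin n) → EuclideanSpace ℝ (Fin n))
    (hP : ∀ u, P u ∈ X ∧ ∀ y ∈ X, ‖u - P u‖ ≤ ‖u - y‖)
    (t : ℕ → ℝ)
    -- the iterates, lying in `X`
    (x : ℕ → EuclideanSpace ℝ (Fin n)) (hx : ∀ k, x k ∈ X)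
    -- the index sets `B k i ⊆ {0, …, min k (W-1)}`
    (B : ℕ → Fin m → Finset ℕ)
    (hB : ∀ k i, ∀ l ∈ B k i, l ≤ min k (W - 1))
    -- `g i j` is a subgradient of `f i` at `x j` (used for `j = k - l`, `l ∈ B k i`)
    (g : Fin m → ℕ → EuclideanSpace ℝ (Fin n))
    (hg : ∀ k i, ∀ l ∈ B k i, ∀ y,
      f i (x (k - l)) + ⟪g i (k - l), y - x (k - l)⟫ ≤ f i y)
    -- convex weights
    (α : ℕ → Fin m → ℕ → ℝ)
    (hα0 : ∀ k i l, 0 ≤ α k i l)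
    (hα1 : ∀ k i, (B k i).Nonempty → ∑ l ∈ B k i, α k i l = 1)
    -- the update rule
    (hupdate : ∀ k, x (k + 1) =
      P (x k - t k • ∑ i : Fin m, ∑ l ∈ B k i, α k i l • g i (k - l)))    -- every component is evaluated at least once in every `W` iterations
    (hfull : ∀ k, W - 1 ≤ k → ∀ i, (B k i).Nonempty)
    -- constant step size
    (tc : ℝ) (htc : 0 < tc) (hconst : ∀ k, t k = tc)
    -- `inf_{z ∈ X} f z = -∞`
    (hinf : ∀ M : ℝ, ∃ z ∈ X, (∑ i : Fin m, f i z) < M) :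
    Filter.liminf (fun k => ((∑ i : Fin m, f i (x k) : ℝ) : EReal))
      Filter.atTop = ⊥ := by
  have hgC (k i) (l) (hl : l ∈ B k i) : ‖g i (k - l)‖ ≤ C := hCbound i _ (hx _) _ (hg k i l hl)
  have hstep (k) : ‖x (k + 1) - x k‖ ≤ tc * (m * C) := by
    have hw1 (i) : ∑ l ∈ B k i, α k i l ≤ 1 := by
      rcases (B k i).eq_empty_or_nonempty with hB | hB
      · simp [hB]
      · exact (hα1 k i hB).le
    rw [hupdate, hconst]
    refine (norm_proj_sub_le hXconvex hP _ (hx k)).trans ?_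
    rw [sub_sub_cancel_left, norm_neg, norm_smul, Real.norm_of_nonneg htc.le]
    have := norm_sum_sum_smul_le (fun i l _ => hα0 k i l) hw1 hC.le (hgC k)
    exact mul_le_mul_of_nonneg_left (by simpa using this) htc.le
  have hlag (k i) (l) (hl : l ∈ B k i) : ‖x k - x (k - l)‖ ≤ (W - 1 : ℕ) * (tc * (m * C)) :=
    (norm_sub_sub_le_mul hstep ((hB k i l hl).trans (min_le_left _ _))).trans
      (mul_le_mul_of_nonneg_right (by exact_mod_cast (hB k i l hl).trans (min_le_right _ _))
        (by positivity))
  set e := 2 * tc * (m * (2 * C * ((W - 1 : ℕ) * (tc * (m * C))))) + (tc * (m * C)) ^ 2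
  refine EReal.liminf_coe_eq_bot fun M => ?_
  obtain ⟨z, hz, hFz⟩ := hinf (M - e / (2 * tc))
  refine frequently_lt_of_eventually_le_sub_mul (a := fun k => ‖x k - z‖ ^ 2)
    (b := ∑ i, f i z) (c := 2 * tc) (e := e) (fun _ => sq_nonneg _) (by positivity) ?_
    (by linarith)
  filter_upwards [eventually_ge_atTop (W - 1)] with k hk
  rw [hupdate, hconst]
  simpa using sq_norm_proj_sub_sum_sum_smul_sub_le hXconvex hP hz htc.le hC.le
    (fun i l _ => hα0 k i l) (fun i => hα1 k i (hfull k hk i)) (hg k) (hgC k)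
    (fun i _ _ => (hfconv i).sub_le_mul_norm_sub (hCbound i _ (hx k)) _) (hlag k)

/-- Constant step size, `inf_X f = -∞`: then
`liminf f (x k) = -∞` (in the extended reals). -/
theorem incremental_cp_constant_step_unbounded_below
    (n m W : ℕ) (hW : 1 ≤ W)
    (X : Set (EuclideanSpace ℝ (Fin n)))
    (hXne : X.Nonempty) (hXclosed : IsClosed X) (hXconvex : Convex ℝ X)
    (f : Fin m → EuclideanSpace ℝ (Fin n) → ℝ)
    (hfconv : ∀ i, ConvexOn ℝ Set.univ (f i))
    (C : ℝ) (hC : 0 < C)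
    -- every subgradient of any `f i` at any point of `X` has norm at most `C`
    (hCbound : ∀ i, ∀ z ∈ X, ∀ g : EuclideanSpace ℝ (Fin n),
      (∀ y, f i z + ⟪g, y - z⟫ ≤ f i y) → ‖g‖ ≤ C)
    -- `P` is the Euclidean projection onto `X`
    (P : EuclideanSpace ℝ (Fin n) → EuclideanSpace ℝ (Fin n))
    (hP : ∀ u, P u ∈ X ∧ ∀ y ∈ X, ‖u - P u‖ ≤ ‖u - y‖)
    -- positive step sizes
    (t : ℕ → ℝ) (ht : ∀ k, 0 < t k)
    -- the iterates, lying in `X`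
    (x : ℕ → EuclideanSpace ℝ (Fin n)) (hx : ∀ k, x k ∈ X)
    -- the index sets `B k i ⊆ {0, …, min k (W-1)}`
    (B : ℕ → Fin m → Finset ℕ)
    (hB : ∀ k i, ∀ l ∈ B k i, l ≤ min k (W - 1))
    -- `g i j` is a subgradient of `f i` at `x j` (used for `j = k - l`, `l ∈ B k i`)
    (g : Fin m → ℕ → EuclideanSpace ℝ (Fin n))
    (hg : ∀ k i, ∀ l ∈ B k i, ∀ y,
      f i (x (k - l)) + ⟪g i (k - l), y - x (k - l)⟫ ≤ f i y)
    -- convex weights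
    (α : ℕ → Fin m → ℕ → ℝ)
    (hα0 : ∀ k i l, 0 ≤ α k i l)
    (hα1 : ∀ k i, (B k i).Nonempty → ∑ l ∈ B k i, α k i l = 1)
    (hα2 : ∀ k i, B k i = ∅ → ∀ l, α k i l = 0)
    -- the update rule
    (hupdate : ∀ k, x (k + 1) =
      P (x k - t k • ∑ i : Fin m, ∑ l ∈ B k i, α k i l • g i (k - l)))    -- every component is evaluated at least once in every `W` iterations
    (hfull : ∀ k, W - 1 ≤ k → ∀ i, (B k i).Nonempty)
    -- constant step size
    (tc : ℝ) (htc : 0 < tc) (hconst : ∀ k, t k = tc)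
    -- `inf_{z ∈ X} f z = -∞`
    (hinf : ∀ M : ℝ, ∃ z ∈ X, (∑ i : Fin m, f i z) < M) :
    Filter.liminf (fun k => ((∑ i : Fin m, f i (x k) : ℝ) : EReal))
      Filter.atTop = ⊥ :=
  incremental_cp_constant_step_unbounded_below_general n m W X hXconvex f hfconv C hC hCbound P hP t
    x hx B hB g hg α hα0 hα1 hupdate hfull tc htc hconst hinf
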